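/- Every Wahl chain [e_1,...,e_r] different from [4] and [2,5] admits a marking making it a del Pezzo Wahl chain of type (I) and degree 4, with central mark e_1 or e_r. -/

import Mathlib

/-- The value of a Hirzebruch–Jung continued fraction `[e₁,…,e_r]`,
computed as `e₁ - 1/[e₂,…,e_r]` with `[e_r] = e_r`. -/
def hjVal : List ℤ → ℚ
  | [] => 0
  | [x] => (x : ℚ)
  | x :: y :: xs => (x : ℚ) - (hjVal (y :: xs))⁻¹

/-- `IsHJ m q L` : `L` is the HJ continued fraction expansion of `m/q`
(all entries at least 2 and value `m/q`). -/
def IsHJ (m q : ℤ) (L : List ℤ) : Prop :=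
  (∀ e ∈ L, 2 ≤ e) ∧ hjVal L = (m : ℚ) / (q : ℚ)

/-- `IsWahlChain n a L` : `L` is the Wahl chain of `n²/(na-1)` for coprime `0 < a < n`. -/
def IsWahlChain (n a : ℤ) (L : List ℤ) : Prop :=
  0 < a ∧ a < n ∧ Int.gcd n a = 1 ∧ IsHJ (n ^ 2) (n * a - 1) L

/-- One blow-down move on a chain: `[…,u,1,v,…] ↦ […,u-1,v-1,…]`,
including the boundary cases `[1,v,…] ↦ [v-1,…]` and `[…,u,1] ↦ […,u-1]`. -/
inductive BDStep : List ℤ → List ℤ → Prop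
  | mid (l r : List ℤ) (u v : ℤ) :
      BDStep (l ++ u :: 1 :: v :: r) (l ++ (u - 1) :: (v - 1) :: r)
  | left (r : List ℤ) (v : ℤ) : BDStep (1 :: v :: r) ((v - 1) :: r)
  | right (l : List ℤ) (u : ℤ) : BDStep (l ++ [u, 1]) (l ++ [u - 1])

/-- A zero continued fraction: a chain that blows down to `[1,1]`. -/
def IsZCF (L : List ℤ) : Prop :=
  Relation.ReflTransGen BDStep L [1, 1]

/-- `AdmitsZCF L lam` : one can decrease some entries of `L` by positive integers
with total sum `lam + 1` so that the result is a zero continued fraction. -/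
def AdmitsZCF (L : List ℤ) (lam : ℤ) : Prop :=
  ∃ K : List ℤ, K.length = L.length ∧ (∀ i : ℕ, K.getD i 0 ≤ L.getD i 0) ∧
    L.sum - K.sum = lam + 1 ∧ IsZCF K

/-!
Indexing chains by `(n, a)` and tracking continuant matrices, the two Wahl operations
`appendTwo` and `consTwo` realise the Euclidean steps `(n - a, a) ↦ (n, a)` and
`(a, 2a - n) ↦ (n, a)`, so every pair `(n, a)` has a chain built from `[4]`; by uniqueness of
HJ expansions it is the Wahl chain. Interior blow-downs commute with both operations, so the
zero continued fraction `[1, 1]` below `[2, 5]` and `[5, 2]` is carried along: every generated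
chain `L ≠ [4]` lies entrywise above a zero continued fraction `K` with `ΣL - ΣK = 5`. Writing
the chain as `appendTwo L₀` (resp. `consTwo L₀`), its `dropLast` (resp. `tail`) is `L₀` with
the first (resp. last) entry raised by one, which raises the deficit to `6 = 5 + 1`.
-/

open Relation

theorem List.modifyLast_eq_reverse_modifyHead_reverse {α : Type*} (f : α → α) (l : List α) :
    l.modifyLast f = (l.reverse.modifyHead f).reverse := by
  rcases l.eq_nil_or_concat' with rfl | ⟨l, x, rfl⟩
  · rfl
  · simp [List.modifyLast_concat]

theorem List.forall₂_modifyHead {α β : Type*} {R : α → β → Prop} {f : α → α} {g : β → β}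
    (hfg : ∀ a b, R a b → R (f a) (g b)) :
    ∀ {K : List α} {L : List β}, Forall₂ R K L → Forall₂ R (K.modifyHead f) (L.modifyHead g)
  | _, _, .nil => .nil
  | _, _, .cons h t => .cons (hfg _ _ h) t

theorem List.getD_le_getD_of_forall₂ {α : Type*} [Preorder α] (d : α) :
    ∀ {K L : List α}, Forall₂ (· ≤ ·) K L → ∀ i, K.getD i d ≤ L.getD i d
  | _, _, .nil, _ => le_rfl
  | _, _, .cons h _, 0 => h
  | _, _, .cons _ t, i + 1 => getD_le_getD_of_forall₂ d t i

lemma hjVal_cons (e : ℤ) (L : List ℤ) : hjVal (e :: L) = e - (hjVal L)⁻¹ := by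
  cases L <;> simp [hjVal]

def contMat (L : List ℤ) : Matrix (Fin 2) (Fin 2) ℤ :=
  (L.map fun e => !![e, -1; 1, 0]).prod

@[simp] lemma contMat_nil : contMat [] = 1 := rfl

@[simp] lemma contMat_cons (e : ℤ) (L : List ℤ) :
    contMat (e :: L) = !![e, -1; 1, 0] * contMat L := by
  simp [contMat]

@[simp] lemma contMat_singleton (e : ℤ) : contMat [e] = !![e, -1; 1, 0] := by
  simp [contMat]

lemma contMat_append (L M : List ℤ) : contMat (L ++ M) = contMat L * contMat M := by
  simp [contMat]

lemma contMat_cons_zero_zero (e : ℤ) (L : List ℤ) :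
    contMat (e :: L) 0 0 = e * contMat L 0 0 - contMat L 1 0 := by
  simp [Matrix.mul_apply, Fin.sum_univ_two, sub_eq_add_neg]

lemma contMat_cons_one_zero (e : ℤ) (L : List ℤ) :
    contMat (e :: L) 1 0 = contMat L 0 0 := by
  simp [Matrix.mul_apply, Fin.sum_univ_two]

lemma contMat_one_zero_lt {L : List ℤ} (hL : ∀ e ∈ L, 2 ≤ e) :
    0 ≤ contMat L 1 0 ∧ contMat L 1 0 < contMat L 0 0 := by
  induction L with
  | nil => simp
  | cons e L ih =>
    obtain ⟨h0, h1⟩ := ih fun x hx => hL x (by simp [hx])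
    have he : 2 ≤ e := hL e (by simp)
    rw [contMat_cons_zero_zero, contMat_cons_one_zero]
    constructor <;> nlinarith

lemma hjVal_eq_div {L : List ℤ} (hL : ∀ e ∈ L, 2 ≤ e) :
    hjVal L = (contMat L 0 0 : ℚ) / contMat L 1 0 := by
  induction L with
  | nil => simp [hjVal]
  | cons e L ih =>
    have hL' : ∀ x ∈ L, 2 ≤ x := fun x hx => hL x (by simp [hx])
    have hp : (contMat L 0 0 : ℚ) ≠ 0 := by
      have := contMat_one_zero_lt hL'
      exact_mod_cast (by omega : contMat L 0 0 ≠ 0)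
    rw [hjVal_cons, ih hL', inv_div, contMat_cons_zero_zero, contMat_cons_one_zero]
    field_simp
    push_cast
    ring

lemma one_lt_hjVal {L : List ℤ} (hne : L ≠ []) (hL : ∀ e ∈ L, 2 ≤ e) : 1 < hjVal L := by
  obtain ⟨e, L, rfl⟩ := List.exists_cons_of_ne_nil hne
  have h := contMat_one_zero_lt hL
  have h' := contMat_one_zero_lt (L := L) fun x hx => hL x (by simp [hx])
  have hpos : (0 : ℚ) < contMat (e :: L) 1 0 := by
    rw [contMat_cons_one_zero]
    exact_mod_cast h'.1.trans_lt h'.2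
  rw [hjVal_eq_div hL, one_lt_div hpos]
  exact_mod_cast h.2

lemma ceil_hjVal_cons {e : ℤ} {L : List ℤ} (hL : ∀ x ∈ e :: L, 2 ≤ x) :
    ⌈hjVal (e :: L)⌉ = e := by
  have hL' : ∀ x ∈ L, 2 ≤ x := fun x hx => hL x (by simp [hx])
  have hnonneg : 0 ≤ (hjVal L)⁻¹ := by
    obtain ⟨h0, h1⟩ := contMat_one_zero_lt hL'
    rw [hjVal_eq_div hL', inv_div]
    apply div_nonneg <;> exact_mod_cast (by omega)
  have hlt : (hjVal L)⁻¹ < 1 := by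
    rcases eq_or_ne L [] with rfl | hne
    · simp [hjVal]
    · exact inv_lt_one_of_one_lt₀ (one_lt_hjVal hne hL')
  rw [Int.ceil_eq_iff, hjVal_cons]
  constructor <;> linarith

lemma eq_of_hjVal_eq : ∀ {L M : List ℤ}, (∀ e ∈ L, 2 ≤ e) → (∀ e ∈ M, 2 ≤ e) →
    hjVal L = hjVal M → L = M
  | [], [], _, _, _ => rfl
  | [], _ :: _, _, hM, h => by
    have := one_lt_hjVal (List.cons_ne_nil _ _) hM
    rw [← h] at this
    norm_num [hjVal] at this
  | _ :: _, [], hL, _, h => by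
    have := one_lt_hjVal (List.cons_ne_nil _ _) hL
    rw [h] at this
    norm_num [hjVal] at this
  | e :: L, f :: M, hL, hM, h => by
    obtain rfl : e = f := by rw [← ceil_hjVal_cons hL, h, ceil_hjVal_cons hM]
    congr 1
    exact eq_of_hjVal_eq (fun x hx => hL x (by simp [hx])) (fun x hx => hM x (by simp [hx]))
      (by simpa [hjVal_cons] using h)

def appendTwo (L : List ℤ) : List ℤ := L.modifyHead (· + 1) ++ [2]

def consTwo (L : List ℤ) : List ℤ := 2 :: L.modifyLast (· + 1)

@[simp] lemma appendTwo_four : appendTwo [4] = [5, 2] := rfl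

@[simp] lemma consTwo_four : consTwo [4] = [2, 5] := rfl

lemma consTwo_eq_reverse_appendTwo_reverse (L : List ℤ) :
    consTwo L = (appendTwo L.reverse).reverse := by
  simp [consTwo, appendTwo, List.modifyLast_eq_reverse_modifyHead_reverse]

lemma contMat_modifyHead_succ {L : List ℤ} (hL : L ≠ []) :
    contMat (L.modifyHead (· + 1)) = !![1, 1; 0, 1] * contMat L := by
  obtain ⟨e, L, rfl⟩ := List.exists_cons_of_ne_nil hL
  rw [List.modifyHead_cons, contMat_cons, contMat_cons, ← Matrix.mul_assoc]
  congr 1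
  ext i j
  fin_cases i <;> fin_cases j <;> simp

lemma contMat_modifyLast_succ {L : List ℤ} (hL : L ≠ []) :
    contMat (L.modifyLast (· + 1)) = contMat L * !![1, 0; -1, 1] := by
  obtain ⟨L, e, rfl⟩ := (List.eq_nil_or_concat' L).resolve_left hL
  simp [List.modifyLast_concat, contMat_append, Matrix.mul_assoc]

-- The whole matrix, not just the first column `(n², na - 1)`, has to be tracked: both Wahl
-- operations change the right end of the chain, i.e. multiply the matrix on the right.
def wahlMat (n a : ℤ) : Matrix (Fin 2) (Fin 2) ℤ :=
  !![n ^ 2, -(n * (n - a) - 1); n * a - 1, -(a * (n - a) - 1)]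

inductive WahlGen : ℤ → ℤ → List ℤ → Prop
  | four : WahlGen 2 1 [4]
  | appendTwo {n a : ℤ} {L : List ℤ} : WahlGen n a L → WahlGen (n + a) a (appendTwo L)
  | consTwo {n a : ℤ} {L : List ℤ} : WahlGen n a L → WahlGen (2 * n - a) n (consTwo L)

namespace WahlGen

variable {n a : ℤ} {L : List ℤ}

lemma ne_nil (h : WahlGen n a L) : L ≠ [] := by
  cases h <;> simp [_root_.appendTwo, _root_.consTwo]

lemma two_le (h : WahlGen n a L) : ∀ e ∈ L, 2 ≤ e := by
  induction h with
  | four => simp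
  | @appendTwo n a L h ih =>
    obtain ⟨e, L, rfl⟩ := List.exists_cons_of_ne_nil h.ne_nil
    simp only [List.forall_mem_cons] at ih
    simp [_root_.appendTwo]
    grind
  | @consTwo n a L h ih =>
    obtain ⟨L, e, rfl⟩ := (List.eq_nil_or_concat' L).resolve_left h.ne_nil
    simp only [List.forall_mem_append, List.forall_mem_singleton] at ih
    simp [_root_.consTwo, List.modifyLast_concat]
    grind

lemma contMat_eq (h : WahlGen n a L) : contMat L = wahlMat n a := by
  induction h with
  | four =>
    ext i j
    fin_cases i <;> fin_cases j <;> simp [wahlMat]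
  | @appendTwo n a L h ih =>
    rw [_root_.appendTwo, contMat_append, contMat_modifyHead_succ h.ne_nil, ih]
    simp only [wahlMat, contMat_singleton, Matrix.mul_fin_two, EmbeddingLike.apply_eq_iff_eq,
      Matrix.vecCons_inj, and_true]
    refine ⟨⟨?_, ?_⟩, ?_, ?_⟩ <;> ring
  | @consTwo n a L h ih =>
    rw [_root_.consTwo, contMat_cons, contMat_modifyLast_succ h.ne_nil, ih]
    simp only [wahlMat, Matrix.mul_fin_two, EmbeddingLike.apply_eq_iff_eq,
      Matrix.vecCons_inj, and_true]
    refine ⟨⟨?_, ?_⟩, ?_, ?_⟩ <;> ring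

lemma isHJ (h : WahlGen n a L) : IsHJ (n ^ 2) (n * a - 1) L := by
  refine ⟨h.two_le, ?_⟩
  rw [hjVal_eq_div h.two_le, h.contMat_eq]
  simp [wahlMat]

end WahlGen

lemma exists_wahlGen (n a : ℤ) (ha : 0 < a) (han : a < n) (hna : Int.gcd n a = 1) :
    ∃ L, WahlGen n a L := by
  induction hN : n.toNat using Nat.strong_induction_on generalizing n a with
  | _ N ih =>
    rcases lt_trichotomy (2 * a) n with hlt | heq | hgt
    · obtain ⟨L, hL⟩ := ih (n - a).toNat (by omega) (n - a) a ha (by omega) (by simpa) rfl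
      exact ⟨_, by simpa using hL.appendTwo⟩
    · obtain rfl : a = 1 := by
        have : (Int.gcd n a : ℤ) = a := Int.gcd_eq_right ha.le ⟨2, by omega⟩
        omega
      obtain rfl : n = 2 := by omega
      exact ⟨_, .four⟩
    · have hgcd : Int.gcd a (2 * a - n) = 1 := by
        rw [show 2 * a - n = -n + 2 * a by ring, Int.gcd_add_mul_right_right, Int.gcd_neg,
          Int.gcd_comm, hna]
      obtain ⟨L, hL⟩ := ih a.toNat (by omega) a (2 * a - n) (by omega) (by omega) hgcd rfl
      exact ⟨_, by simpa using hL.consTwo⟩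

lemma IsWahlChain.wahlGen {n a : ℤ} {L : List ℤ} (h : IsWahlChain n a L) : WahlGen n a L := by
  obtain ⟨ha, han, hna, hL, hval⟩ := h
  obtain ⟨M, hM⟩ := exists_wahlGen n a ha han hna
  rwa [eq_of_hjVal_eq hL hM.two_le (hval.trans hM.isHJ.2.symm)]

-- Unlike arbitrary `BDStep`s, interior blow-downs commute with `appendTwo` and `consTwo`.
inductive InnerBDStep : List ℤ → List ℤ → Prop
  | mk (l r : List ℤ) (u v : ℤ) :
      InnerBDStep (l ++ u :: 1 :: v :: r) (l ++ (u - 1) :: (v - 1) :: r)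

namespace InnerBDStep

variable {K K' : List ℤ}

lemma bdStep (h : InnerBDStep K K') : BDStep K K' := by
  cases h
  exact .mid ..

lemma reverse (h : InnerBDStep K K') : InnerBDStep K.reverse K'.reverse := by
  obtain ⟨l, r, u, v⟩ := h
  simpa using InnerBDStep.mk r.reverse l.reverse v u

lemma appendTwo (h : InnerBDStep K K') : InnerBDStep (appendTwo K) (appendTwo K') := by
  obtain ⟨_ | ⟨x, l⟩, r, u, v⟩ := h
  · simpa [_root_.appendTwo] using InnerBDStep.mk [] (r ++ [2]) (u + 1) v
  · simpa [_root_.appendTwo] using InnerBDStep.mk ((x + 1) :: l) (r ++ [2]) u v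

lemma consTwo (h : InnerBDStep K K') : InnerBDStep (consTwo K) (consTwo K') := by
  simpa [consTwo_eq_reverse_appendTwo_reverse] using h.reverse.appendTwo.reverse

end InnerBDStep

def IsInnerZCF (K : List ℤ) : Prop :=
  ReflTransGen InnerBDStep K [1, 1]

namespace IsInnerZCF

variable {K : List ℤ}

lemma isZCF (h : IsInnerZCF K) : IsZCF K :=
  ReflTransGen.mono (fun _ _ => InnerBDStep.bdStep) _ _ h

lemma reverse (h : IsInnerZCF K) : IsInnerZCF K.reverse :=
  h.lift List.reverse fun _ _ => InnerBDStep.reverse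

lemma appendTwo (h : IsInnerZCF K) : IsInnerZCF (appendTwo K) :=
  (h.lift _root_.appendTwo fun _ _ => InnerBDStep.appendTwo).tail
    (by simpa [_root_.appendTwo] using InnerBDStep.mk [] [] 2 2)

lemma consTwo (h : IsInnerZCF K) : IsInnerZCF (consTwo K) := by
  simpa [consTwo_eq_reverse_appendTwo_reverse] using h.reverse.appendTwo.reverse

end IsInnerZCF

-- `w` is the weight plus one.
def HasInnerZCFBelow (L : List ℤ) (w : ℤ) : Prop :=
  ∃ K, List.Forall₂ (· ≤ ·) K L ∧ L.sum - K.sum = w ∧ IsInnerZCF K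

namespace HasInnerZCFBelow

variable {L : List ℤ} {w : ℤ}

lemma admitsZCF {lam : ℤ} (h : HasInnerZCFBelow L (lam + 1)) : AdmitsZCF L lam := by
  obtain ⟨K, hKL, hsum, hK⟩ := h
  exact ⟨K, hKL.length_eq, List.getD_le_getD_of_forall₂ 0 hKL, hsum, hK.isZCF⟩

lemma reverse (h : HasInnerZCFBelow L w) : HasInnerZCFBelow L.reverse w := by
  obtain ⟨K, hKL, hsum, hK⟩ := h
  exact ⟨K.reverse, List.forall₂_reverse_iff.2 hKL, by simpa using hsum, hK.reverse⟩

lemma modifyHead_succ (h : HasInnerZCFBelow L w) (hL : L ≠ []) :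
    HasInnerZCFBelow (L.modifyHead (· + 1)) (w + 1) := by
  obtain ⟨K, hKL, hsum, hK⟩ := h
  obtain ⟨e, L, rfl⟩ := List.exists_cons_of_ne_nil hL
  obtain _ | ⟨hle, hKL⟩ := hKL
  refine ⟨_, .cons (by omega : _ ≤ e + 1) hKL, ?_, hK⟩
  simp only [List.sum_cons, List.modifyHead_cons] at hsum ⊢
  omega

lemma modifyLast_succ (h : HasInnerZCFBelow L w) (hL : L ≠ []) :
    HasInnerZCFBelow (L.modifyLast (· + 1)) (w + 1) := by
  simpa [List.modifyLast_eq_reverse_modifyHead_reverse] using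
    (h.reverse.modifyHead_succ (by simpa using hL)).reverse

lemma appendTwo (h : HasInnerZCFBelow L w) : HasInnerZCFBelow (appendTwo L) w := by
  obtain ⟨K, hKL, hsum, hK⟩ := h
  refine ⟨_root_.appendTwo K,
    List.rel_append (List.forall₂_modifyHead (fun _ _ h => by omega) hKL) (by simp), ?_,
    hK.appendTwo⟩
  cases hKL with
  | nil => simpa [_root_.appendTwo] using hsum
  | cons => simp_all [_root_.appendTwo]; omega

lemma consTwo (h : HasInnerZCFBelow L w) : HasInnerZCFBelow (consTwo L) w := by
  simpa [consTwo_eq_reverse_appendTwo_reverse] using h.reverse.appendTwo.reverse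

end HasInnerZCFBelow

lemma WahlGen.hasInnerZCFBelow {n a : ℤ} {L : List ℤ} (h : WahlGen n a L) (h4 : L ≠ [4]) :
    HasInnerZCFBelow L 5 := by
  induction h with
  | four => exact absurd rfl h4
  | @appendTwo n a L h ih =>
    by_cases hL : L = [4]
    · subst hL
      exact ⟨[1, 1], by simp, by simp, .refl⟩
    · exact (ih hL).appendTwo
  | @consTwo n a L h ih =>
    by_cases hL : L = [4]
    · subst hL
      exact ⟨[1, 1], by simp, by simp, .refl⟩
    · exact (ih hL).consTwo

/-- Every Wahl chain other than `[4]` and `[2,5]` (taken up to orientation,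
so also `[5,2]`) admits a marking making it del Pezzo of type (I) and degree 4
(weight 5), with central mark the last or the first entry. -/
theorem stmt8 (n a : ℤ) (L : List ℤ) (h : IsWahlChain n a L)
    (h4 : L ≠ [4]) (h25 : L ≠ [2, 5]) (h52 : L ≠ [5, 2]) :
    AdmitsZCF L.dropLast 5 ∨ AdmitsZCF L.tail 5 := by
  rcases h.wahlGen with _ | @⟨_, _, L, hL⟩ | @⟨_, _, L, hL⟩
  · exact absurd rfl h4
  · have hL4 : L ≠ [4] := by rintro rfl; exact h52 rfl
    left
    rw [appendTwo, List.dropLast_concat]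
    exact ((hL.hasInnerZCFBelow hL4).modifyHead_succ hL.ne_nil).admitsZCF
  · have hL4 : L ≠ [4] := by rintro rfl; exact h25 rfl
    right
    exact ((hL.hasInnerZCFBelow hL4).modifyLast_succ hL.ne_nil).admitsZCF
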